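/- Let c ≥ 7, and in S = ℚ[x_i : i ∈ ℤ/cℤ] let J be the ideal generated by the quadratic monomials x_i x_j for all pairs i, j of cyclic distance ≥ 3 together with the binomials q_i = x_i² − x_{i−1}x_{i−3} for all i ∈ ℤ/cℤ. Then the fifth power of the irrelevant maximal ideal m = (x_0, …, x_{c−1}) is contained in J; in particular every monomial of degree 5 lies in J. -/
import Mathlib


open MvPolynomial

/-- The ideal `J` of `ℚ[x_i : i ∈ ℤ/cℤ]` generated by the monomials `x_i x_j` for
pairs of cyclic distance `≥ 3` together with the binomials `x_i² − x_{i−1} x_{i−3}`. -/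
noncomputable def cyclicQuadricIdeal (c : ℕ) [NeZero c] : Ideal (MvPolynomial (ZMod c) ℚ) :=
  Ideal.span
    ({p | ∃ i j : ZMod c, 3 ≤ (i - j).val ∧ 3 ≤ (j - i).val ∧ p = X i * X j} ∪
     {p | ∃ i : ZMod c, p = X i ^ 2 - X (i - 1) * X (i - 3)})

section Aux

variable {c : ℕ} [NeZero c]

lemma mem_congr {p q : MvPolynomial (ZMod c) ℚ} (h : p = q) (hq : q ∈ cyclicQuadricIdeal c) :
    p ∈ cyclicQuadricIdeal c := h ▸ hq

lemma mul_mem_left_of_eq {p q : MvPolynomial (ZMod c) ℚ} (r : MvPolynomial (ZMod c) ℚ)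
    (h : q ∈ cyclicQuadricIdeal c) (hp : p = q * r) : p ∈ cyclicQuadricIdeal c :=
  hp ▸ Ideal.mul_mem_right r _ h

lemma far_int (hc : 7 ≤ c) (i j : ZMod c) (z : ℤ) (h3 : 3 ≤ z) (h4 : z ≤ 4)
    (hij : i - j = (z : ZMod c)) : X i * X j ∈ cyclicQuadricIdeal c := by
  set n := z.toNat with hn
  have hzn : (n : ℤ) = z := Int.toNat_of_nonneg (by omega)
  have h1 : i - j = ((n : ℕ) : ZMod c) := by rw [hij, ← hzn]; simp
  have hval1 : (i - j).val = n := by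
    rw [h1, ZMod.val_natCast, Nat.mod_eq_of_lt (by omega)]
  have h2 : j - i = ((c - n : ℕ) : ZMod c) := by
    rw [Nat.cast_sub (by omega), ZMod.natCast_self, zero_sub, ← h1]; ring
  have hval2 : (j - i).val = c - n := by
    rw [h2, ZMod.val_natCast, Nat.mod_eq_of_lt (by omega)]
  exact Ideal.subset_span (Or.inl ⟨i, j, by omega, by omega, rfl⟩)

lemma sq_step (i j k : ZMod c) (hj : i - 1 = j) (hk : i - 3 = k)
    (r p : MvPolynomial (ZMod c) ℚ) (hp : p = X i ^ 2 * r)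
    (h : X j * X k * r ∈ cyclicQuadricIdeal c) : p ∈ cyclicQuadricIdeal c := by
  subst hj hk
  have hg : X i ^ 2 - X (i - 1) * X (i - 3) ∈ cyclicQuadricIdeal c :=
    Ideal.subset_span (Or.inr ⟨i, rfl⟩)
  have h2 : (X i ^ 2 - X (i - 1) * X (i - 3)) * r ∈ cyclicQuadricIdeal c :=
    Ideal.mul_mem_right r _ hg
  have hpe : p = (X i ^ 2 - X (i - 1) * X (i - 3)) * r + X (i - 1) * X (i - 3) * r := by
    rw [hp]; ring
  rw [hpe]
  exact add_mem h2 h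

lemma patA (hc : 7 ≤ c) (m : ZMod c) (a b d : ℕ) :
    X m ^ (a + 2) * X (m + 1) ^ (b + 1) * X (m + 2) ^ d ∈ cyclicQuadricIdeal c := by
  apply sq_step m (m - 1) (m - 3) (by ring) (by ring)
    (X m ^ a * X (m + 1) ^ (b + 1) * X (m + 2) ^ d) _ (by ring)
  exact mul_mem_left_of_eq (X (m - 1) * X m ^ a * X (m + 1) ^ b * X (m + 2) ^ d)
    (far_int hc (m + 1) (m - 3) 4 (by norm_num) (by norm_num) (by push_cast; ring)) (by ring)

lemma patB (hc : 7 ≤ c) (m : ZMod c) (a d : ℕ) :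
    X m ^ (a + 3) * X (m + 1) ^ 0 * X (m + 2) ^ d ∈ cyclicQuadricIdeal c := by
  apply sq_step m (m - 1) (m - 3) (by ring) (by ring)
    (X m ^ (a + 1) * X (m + 2) ^ d) _ (by ring)
  exact mul_mem_left_of_eq (X (m - 1) * X m ^ a * X (m + 2) ^ d)
    (far_int hc m (m - 3) 3 (by norm_num) (by norm_num) (by push_cast; ring)) (by ring)

lemma patC (hc : 7 ≤ c) (m : ZMod c) (a b d : ℕ) :
    X m ^ a * X (m + 1) ^ (b + 3) * X (m + 2) ^ d ∈ cyclicQuadricIdeal c := by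
  apply sq_step (m + 1) m (m - 2) (by ring) (by ring)
    (X m ^ a * X (m + 1) ^ (b + 1) * X (m + 2) ^ d) _ (by ring)
  exact mul_mem_left_of_eq (X m ^ (a + 1) * X (m + 1) ^ b * X (m + 2) ^ d)
    (far_int hc (m + 1) (m - 2) 3 (by norm_num) (by norm_num) (by push_cast; ring)) (by ring)

lemma patD (hc : 7 ≤ c) (m : ZMod c) (a d : ℕ) :
    X m ^ a * X (m + 1) ^ 2 * X (m + 2) ^ (d + 1) ∈ cyclicQuadricIdeal c := by
  apply sq_step (m + 1) m (m - 2) (by ring) (by ring)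
    (X m ^ a * X (m + 2) ^ (d + 1)) _ (by ring)
  exact mul_mem_left_of_eq (X m ^ (a + 1) * X (m + 2) ^ d)
    (far_int hc (m + 2) (m - 2) 4 (by norm_num) (by norm_num) (by push_cast; ring)) (by ring)

lemma patE (hc : 7 ≤ c) (m : ZMod c) (a b d : ℕ) :
    X m ^ a * X (m + 1) ^ b * X (m + 2) ^ (d + 3) ∈ cyclicQuadricIdeal c := by
  apply sq_step (m + 2) (m + 1) (m - 1) (by ring) (by ring)
    (X m ^ a * X (m + 1) ^ b * X (m + 2) ^ (d + 1)) _ (by ring)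
  exact mul_mem_left_of_eq (X m ^ a * X (m + 1) ^ (b + 1) * X (m + 2) ^ d)
    (far_int hc (m + 2) (m - 1) 3 (by norm_num) (by norm_num) (by push_cast; ring)) (by ring)

lemma wmem (hc : 7 ≤ c) (m u v : ZMod c) (hu : u = m + 1) (hv : v = m + 2)
    (a b d : ℕ) (h : a + b + d = 5) :
    X m ^ a * X u ^ b * X v ^ d ∈ cyclicQuadricIdeal c := by
  subst hu hv
  by_cases hd : 3 ≤ d
  · obtain ⟨d', rfl⟩ : ∃ d', d = d' + 3 := ⟨d - 3, by omega⟩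
    exact patE hc m a b d'
  by_cases hb3 : 3 ≤ b
  · obtain ⟨b', rfl⟩ : ∃ b', b = b' + 3 := ⟨b - 3, by omega⟩
    exact patC hc m a b' d
  by_cases hb2 : b = 2 ∧ 1 ≤ d
  · obtain ⟨rfl, hd1⟩ := hb2
    obtain ⟨d', rfl⟩ : ∃ d', d = d' + 1 := ⟨d - 1, by omega⟩
    exact patD hc m a d'
  by_cases hb1 : 1 ≤ b
  · obtain ⟨a', rfl⟩ : ∃ a', a = a' + 2 := ⟨a - 2, by omega⟩
    obtain ⟨b', rfl⟩ : ∃ b', b = b' + 1 := ⟨b - 1, by omega⟩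
    exact patA hc m a' b' d
  · obtain rfl : b = 0 := by omega
    obtain ⟨a', rfl⟩ : ∃ a', a = a' + 3 := ⟨a - 3, by omega⟩
    exact patB hc m a' d

lemma prod_window (hc : 7 ≤ c) (m : ZMod c) (f : Fin 5 → ℕ) (hf : ∀ k, f k ≤ 2) :
    (∏ k, X (m + ((f k : ℕ) : ZMod c)) : MvPolynomial (ZMod c) ℚ) ∈ cyclicQuadricIdeal c := by
  classical
  have hmaps : ∀ k ∈ (Finset.univ : Finset (Fin 5)), f k ∈ Finset.range 3 :=
    fun k _ => Finset.mem_range.mpr (by have := hf k; omega)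
  rw [← Finset.prod_fiberwise_of_maps_to hmaps
    (fun k => (X (m + ((f k : ℕ) : ZMod c)) : MvPolynomial (ZMod c) ℚ))]
  have hconst : ∀ t ∈ Finset.range 3,
      (∏ k ∈ Finset.univ.filter (fun k => f k = t), X (m + ((f k : ℕ) : ZMod c))
        : MvPolynomial (ZMod c) ℚ) =
      X (m + ((t : ℕ) : ZMod c)) ^ (Finset.univ.filter (fun k => f k = t)).card := by
    intro t _
    rw [Finset.prod_congr rfl (fun k hk => by
      rw [(Finset.mem_filter.mp hk).2]), Finset.prod_const]
  rw [Finset.prod_congr rfl hconst]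
  have hsum : (Finset.univ.filter (fun k => f k = 0)).card
      + (Finset.univ.filter (fun k => f k = 1)).card
      + (Finset.univ.filter (fun k => f k = 2)).card = 5 := by
    have := Finset.card_eq_sum_card_fiberwise hmaps
    simp [Finset.sum_range_succ] at this
    omega
  rw [Finset.prod_range_succ, Finset.prod_range_succ, Finset.prod_range_one]
  push_cast
  rw [add_zero]
  exact wmem hc m (m + 1) (m + 2) rfl rfl _ _ _ hsum

lemma prod_window5 (hc : 7 ≤ c) (m : ZMod c) (t1 t2 t3 t4 t5 : ℕ)
    (h1 : t1 ≤ 2) (h2 : t2 ≤ 2) (h3 : t3 ≤ 2) (h4 : t4 ≤ 2) (h5 : t5 ≤ 2) :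
    (X (m + (t1 : ZMod c)) * X (m + (t2 : ZMod c)) * X (m + (t3 : ZMod c)) *
      X (m + (t4 : ZMod c)) * X (m + (t5 : ZMod c)) : MvPolynomial (ZMod c) ℚ)
      ∈ cyclicQuadricIdeal c := by
  have := prod_window hc m ![t1, t2, t3, t4, t5] (by
    intro k; fin_cases k <;> simpa)
  rw [Fin.prod_univ_five] at this
  simpa using this

lemma pair_split (i j : ZMod c) :
    (X i * X j : MvPolynomial (ZMod c) ℚ) ∈ cyclicQuadricIdeal c ∨
      ∃ z : ℤ, -2 ≤ z ∧ z ≤ 2 ∧ j = i + (z : ZMod c) := by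
  by_cases h1 : (j - i).val ≤ 2
  · right
    refine ⟨((j - i).val : ℤ), by omega, by exact_mod_cast h1, ?_⟩
    push_cast [ZMod.natCast_val, ZMod.cast_id]; ring
  by_cases h2 : (i - j).val ≤ 2
  · right
    refine ⟨-((i - j).val : ℤ), by
      have : ((i - j).val : ℤ) ≤ 2 := by exact_mod_cast h2
      omega, by omega, ?_⟩
    push_cast [ZMod.natCast_val, ZMod.cast_id]; ring
  · exact Or.inl (Ideal.subset_span (Or.inl ⟨i, j, by omega, by omega, rfl⟩))

lemma far_or_close (hc : 7 ≤ c) (i j : ZMod c) (z : ℤ) (hz : -4 ≤ z) (hz' : z ≤ 4)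
    (hij : j - i = (z : ZMod c)) :
    (X i * X j : MvPolynomial (ZMod c) ℚ) ∈ cyclicQuadricIdeal c ∨ (-2 ≤ z ∧ z ≤ 2) := by
  by_cases h : -2 ≤ z ∧ z ≤ 2
  · exact Or.inr h
  rcases le_or_gt 0 z with hz0 | hz0
  · have h' := far_int hc j i z (by omega) (by omega) hij
    rw [mul_comm] at h'
    exact Or.inl h'
  · refine Or.inl (far_int hc i j (-z) (by omega) (by omega) ?_)
    rw [← neg_sub, hij]; push_cast; ring

lemma key5 (hc : 7 ≤ c) (i1 i2 i3 i4 i5 : ZMod c) :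
    (X i1 * X i2 * X i3 * X i4 * X i5 : MvPolynomial (ZMod c) ℚ) ∈ cyclicQuadricIdeal c := by
  rcases pair_split i1 i2 with h | ⟨z2, hb2, hb2', rfl⟩
  · exact mul_mem_left_of_eq (X i3 * X i4 * X i5) h (by ring)
  rcases pair_split i1 i3 with h | ⟨z3, hb3, hb3', rfl⟩
  · exact mul_mem_left_of_eq (X (i1 + (z2 : ZMod c)) * X i4 * X i5) h (by ring)
  rcases pair_split i1 i4 with h | ⟨z4, hb4, hb4', rfl⟩
  · exact mul_mem_left_of_eq (X (i1 + (z2 : ZMod c)) * X (i1 + (z3 : ZMod c)) * X i5) h (by ring)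
  rcases pair_split i1 i5 with h | ⟨z5, hb5, hb5', rfl⟩
  · exact mul_mem_left_of_eq (X (i1 + (z2 : ZMod c)) * X (i1 + (z3 : ZMod c)) *
      X (i1 + (z4 : ZMod c))) h (by ring)
  rcases far_or_close hc (i1 + (z2 : ZMod c)) (i1 + (z3 : ZMod c)) (z3 - z2)
      (by omega) (by omega) (by push_cast; ring) with h | ⟨h23, h23'⟩
  · exact mul_mem_left_of_eq (X i1 * X (i1 + (z4 : ZMod c)) * X (i1 + (z5 : ZMod c))) h (by ring)
  rcases far_or_close hc (i1 + (z2 : ZMod c)) (i1 + (z4 : ZMod c)) (z4 - z2)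
      (by omega) (by omega) (by push_cast; ring) with h | ⟨h24, h24'⟩
  · exact mul_mem_left_of_eq (X i1 * X (i1 + (z3 : ZMod c)) * X (i1 + (z5 : ZMod c))) h (by ring)
  rcases far_or_close hc (i1 + (z2 : ZMod c)) (i1 + (z5 : ZMod c)) (z5 - z2)
      (by omega) (by omega) (by push_cast; ring) with h | ⟨h25, h25'⟩
  · exact mul_mem_left_of_eq (X i1 * X (i1 + (z3 : ZMod c)) * X (i1 + (z4 : ZMod c))) h (by ring)
  rcases far_or_close hc (i1 + (z3 : ZMod c)) (i1 + (z4 : ZMod c)) (z4 - z3)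
      (by omega) (by omega) (by push_cast; ring) with h | ⟨h34, h34'⟩
  · exact mul_mem_left_of_eq (X i1 * X (i1 + (z2 : ZMod c)) * X (i1 + (z5 : ZMod c))) h (by ring)
  rcases far_or_close hc (i1 + (z3 : ZMod c)) (i1 + (z5 : ZMod c)) (z5 - z3)
      (by omega) (by omega) (by push_cast; ring) with h | ⟨h35, h35'⟩
  · exact mul_mem_left_of_eq (X i1 * X (i1 + (z2 : ZMod c)) * X (i1 + (z4 : ZMod c))) h (by ring)
  rcases far_or_close hc (i1 + (z4 : ZMod c)) (i1 + (z5 : ZMod c)) (z5 - z4)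
      (by omega) (by omega) (by push_cast; ring) with h | ⟨h45, h45'⟩
  · exact mul_mem_left_of_eq (X i1 * X (i1 + (z2 : ZMod c)) * X (i1 + (z3 : ZMod c))) h (by ring)
  -- all offsets within 2 of each other; find the window base
  obtain ⟨w, hw1, hw2, hw3, hw4, hw5⟩ :
      ∃ w : ℤ, (0 - w = 0 ∨ 0 - w = 1 ∨ 0 - w = 2) ∧
        (z2 - w = 0 ∨ z2 - w = 1 ∨ z2 - w = 2) ∧
        (z3 - w = 0 ∨ z3 - w = 1 ∨ z3 - w = 2) ∧
        (z4 - w = 0 ∨ z4 - w = 1 ∨ z4 - w = 2) ∧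
        (z5 - w = 0 ∨ z5 - w = 1 ∨ z5 - w = 2) :=
    ⟨min 0 (min z2 (min z3 (min z4 z5))), by omega, by omega, by omega, by omega, by omega⟩
  have hidx : ∀ z : ℤ, w ≤ z → i1 + (z : ZMod c) =
      (i1 + (w : ZMod c)) + (((z - w).toNat : ℕ) : ZMod c) := by
    intro z hz
    have ht : (((z - w).toNat : ℕ) : ℤ) = z - w := Int.toNat_of_nonneg (by omega)
    have h2 : ((((z - w).toNat : ℕ) : ℤ) : ZMod c) = ((z - w : ℤ) : ZMod c) := by rw [ht]
    push_cast at h2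
    rw [h2]; ring
  have e1 : (X i1 : MvPolynomial (ZMod c) ℚ) =
      X ((i1 + (w : ZMod c)) + ((((0 : ℤ) - w).toNat : ℕ) : ZMod c)) := by
    have := hidx 0 (by omega)
    simp only [Int.cast_zero, add_zero] at this
    rw [← this]
  rw [congrArg X (hidx z2 (by omega)), congrArg X (hidx z3 (by omega)),
    congrArg X (hidx z4 (by omega)), congrArg X (hidx z5 (by omega)), e1]
  exact prod_window5 hc (i1 + (w : ZMod c)) _ _ _ _ _
    (by omega) (by omega) (by omega) (by omega) (by omega)

end Aux

/-- For `c ≥ 7`, the fifth power of the irrelevant maximal ideal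
`m = (x_0, …, x_{c−1})` is contained in `J`. -/
theorem irrelevant_pow_five_le (c : ℕ) (hc : 7 ≤ c) [NeZero c] :
    (Ideal.span (Set.range (X : ZMod c → MvPolynomial (ZMod c) ℚ))) ^ 5 ≤
      cyclicQuadricIdeal c := by
  set r := Set.range (X : ZMod c → MvPolynomial (ZMod c) ℚ) with hr
  have h5 : (Ideal.span r) ^ 5 =
      Ideal.span r * Ideal.span r * Ideal.span r * Ideal.span r * Ideal.span r := by ring
  rw [h5, Ideal.span_mul_span', Ideal.span_mul_span', Ideal.span_mul_span',
    Ideal.span_mul_span', Ideal.span_le]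
  rintro p ⟨q4, ⟨q3, ⟨q2, ⟨a1, ⟨i1, rfl⟩, a2, ⟨i2, rfl⟩, rfl⟩, a3, ⟨i3, rfl⟩, rfl⟩,
    a4, ⟨i4, rfl⟩, rfl⟩, a5, ⟨i5, rfl⟩, rfl⟩
  exact key5 hc i1 i2 i3 i4 i5
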